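/- arXiv:2409.10410 — 2 statements merged into one kernel-verified Lean document; each statement's English description precedes it below -/
import Mathlib

section
/- Let d, s be positive integers and t a real number with t ≥ ds/2 and t ≥ 1. Then for all integers i with 0 ≤ i ≤ s-1 and j with 0 ≤ j ≤ d-1, we have (1 + 1/t)^(i/s) · (1 + j/(dt))^(1/s) ≥ 1 + i/(st) + (j-1)/(dst). -/
/-!
Bernoulli's inequality for the exponent `1 - p` gives `(1 + x) ^ p ≥ (1 + x) / (1 + (1 - p) x)`,
hence the quadratic lower bound `(1 + x) ^ p ≥ 1 + p x - p (1 - p) x²`. Applying it to both factors,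
with `p (1 - p) ≤ 1/4`, the product is at least `1 + i/(st) + j/(dst) - 1/(2t²)`, and
`1/(2t²) ≤ 1/(dst)` is exactly the hypothesis `t ≥ ds/2`.
-/

theorem Real.one_add_mul_sub_le_rpow_one_add {x p : ℝ} (hx : 0 ≤ x) (hp₀ : 0 ≤ p) (hp₁ : p ≤ 1) :
    1 + p * x - p * (1 - p) * x ^ 2 ≤ (1 + x) ^ p := by
  have hx₁ : 0 < 1 + x := by linarith
  have hden : 0 < 1 + (1 - p) * x := by nlinarith
  have bernoulli : (1 + x) ^ (1 - p) ≤ 1 + (1 - p) * x :=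
    rpow_one_add_le_one_add_mul_self (by linarith) (by linarith) (by linarith)
  have split : 1 + x = (1 + x) ^ p * (1 + x) ^ (1 - p) := by
    rw [← Real.rpow_add hx₁, add_sub_cancel, Real.rpow_one]
  refine le_of_mul_le_mul_right ?_ hden
  calc (1 + p * x - p * (1 - p) * x ^ 2) * (1 + (1 - p) * x)
      = 1 + x - p * (1 - p) ^ 2 * x ^ 3 := by ring
    _ ≤ 1 + x := sub_le_self _ (by positivity)
    _ = (1 + x) ^ p * (1 + x) ^ (1 - p) := split
    _ ≤ (1 + x) ^ p * (1 + (1 - p) * x) := mul_le_mul_of_nonneg_left bernoulli (by positivity)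

theorem Real.one_add_mul_add_mul_sub_le_rpow_mul_rpow {x y p q : ℝ} (hx₀ : 0 ≤ x) (hx₁ : x ≤ 1)
    (hy₀ : 0 ≤ y) (hy₁ : y ≤ 1) (hp₀ : 0 ≤ p) (hp₁ : p ≤ 1) (hq₀ : 0 ≤ q) (hq₁ : q ≤ 1) :
    1 + p * x + q * y - (x ^ 2 + y ^ 2) / 4 ≤ (1 + x) ^ p * (1 + y) ^ q := by
  have hA : 0 ≤ p * x - p * (1 - p) * x ^ 2 := by
    have : p * x - p * (1 - p) * x ^ 2 = p * x * (1 - (1 - p) * x) := by ring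
    rw [this]; exact mul_nonneg (mul_nonneg hp₀ hx₀) (by nlinarith)
  have hB : 0 ≤ q * y - q * (1 - q) * y ^ 2 := by
    have : q * y - q * (1 - q) * y ^ 2 = q * y * (1 - (1 - q) * y) := by ring
    rw [this]; exact mul_nonneg (mul_nonneg hq₀ hy₀) (by nlinarith)
  have hpx := Real.one_add_mul_sub_le_rpow_one_add hx₀ hp₀ hp₁
  have hqy := Real.one_add_mul_sub_le_rpow_one_add hy₀ hq₀ hq₁
  calc 1 + p * x + q * y - (x ^ 2 + y ^ 2) / 4
      ≤ 1 + (p * x - p * (1 - p) * x ^ 2) + (q * y - q * (1 - q) * y ^ 2) := by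
        nlinarith [sq_nonneg (2 * p - 1), sq_nonneg (2 * q - 1), sq_nonneg x, sq_nonneg y]
    _ ≤ (1 + (p * x - p * (1 - p) * x ^ 2)) * (1 + (q * y - q * (1 - q) * y ^ 2)) := by
        nlinarith [mul_nonneg hA hB]
    _ ≤ (1 + x) ^ p * (1 + y) ^ q := by
        gcongr <;> linarith

theorem stmt_6 (d s : ℕ) (hd : 0 < d) (hs : 0 < s) (t : ℝ) (ht : t ≥ d * s / 2) (ht1 : 1 ≤ t)
    (i j : ℕ) (hi : i ≤ s - 1) (hj : j ≤ d - 1) :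
    (1 + 1 / t) ^ ((i : ℝ) / s) * (1 + j / (d * t)) ^ ((1 : ℝ) / s) ≥
      1 + i / (s * t) + ((j : ℝ) - 1) / (d * s * t) := by
  have ht₀ : 0 < t := by linarith
  have hd' : (0 : ℝ) < d := by exact_mod_cast hd
  have hs' : (0 : ℝ) < s := by exact_mod_cast hs
  have hi' : (i : ℝ) ≤ s := by exact_mod_cast (by omega : i ≤ s)
  have hj' : (j : ℝ) ≤ d := by exact_mod_cast (by omega : j ≤ d)
  have hx : 1 / t ≤ 1 := by rw [div_le_one ht₀]; exact ht1
  have hy : (j : ℝ) / (d * t) ≤ 1 / t := by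
    rw [div_le_div_iff₀ (by positivity) ht₀]; nlinarith
  have hprod := Real.one_add_mul_add_mul_sub_le_rpow_mul_rpow (p := i / s) (q := 1 / s)
    (by positivity) hx (by positivity) (hy.trans hx) (by positivity) ((div_le_one hs').2 hi')
    (by positivity) ((div_le_one hs').2 (by exact_mod_cast hs))
  have slack : ((1 / t) ^ 2 + ((j : ℝ) / (d * t)) ^ 2) / 4 ≤ 1 / (d * s * t) :=
    calc ((1 / t) ^ 2 + ((j : ℝ) / (d * t)) ^ 2) / 4 ≤ 1 / (2 * t * t) := by
          have := pow_le_pow_left₀ (by positivity) hy 2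
          rw [show 1 / (2 * t * t) = (1 / t) ^ 2 / 2 by field_simp]; linarith
      _ ≤ 1 / (d * s * t) := one_div_le_one_div_of_le (by positivity) (by nlinarith)
  have rhs : 1 + (i : ℝ) / (s * t) + ((j : ℝ) - 1) / (d * s * t)
      = 1 + i / s * (1 / t) + 1 / s * (j / (d * t)) - 1 / (d * s * t) := by
    field_simp; ring
  rw [ge_iff_le, rhs]
  linarith
end

section
/- Let m ≥ 2, d ≥ 2, s ≥ 3 be integers with m ≥ d^(s-1), and let n > 0 be a real number. Define f(t) = t^(1/(s-1)) + (d-1)·((n-t)/(m-1))^(1/(s-1)) for t ∈ [n/m, n]. Then for all t in [n/m, n], f(t) ≥ d·(n/m)^(1/(s-1)). -/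
theorem stmt_10 (m d s : ℕ) (hm2 : 2 ≤ m) (hd : 2 ≤ d) (hs : 3 ≤ s) (hmd : d ^ (s - 1) ≤ m)
    (n : ℝ) (hn : 0 < n) (t : ℝ) (ht1 : n / m ≤ t) (ht2 : t ≤ n) :
    t ^ (1 / ((s : ℝ) - 1)) + ((d : ℝ) - 1) * ((n - t) / ((m : ℝ) - 1)) ^ (1 / ((s : ℝ) - 1)) ≥
      d * (n / m) ^ (1 / ((s : ℝ) - 1)) := by
  set α := 1 / ((s : ℝ) - 1) with hαdef
  have hs3 : (3:ℝ) ≤ (s:ℝ) := by exact_mod_cast hs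
  have hs2 : (2:ℝ) ≤ (s:ℝ) - 1 := by linarith
  have hα0 : 0 < α := div_pos one_pos (by linarith)
  have hα1 : α < 1 := by
    rw [hαdef, div_lt_one (by linarith)]; linarith
  have hm1 : (1:ℝ) < m := by exact_mod_cast Nat.lt_of_lt_of_le one_lt_two hm2
  have hmpos : (0:ℝ) < m := by linarith
  have hd1 : (1:ℝ) ≤ (d:ℝ) := by exact_mod_cast Nat.one_le_of_lt hd
  set a := n / m with hadef
  have ha : 0 < a := div_pos hn hmpos
  set l := (n - t) * m / (n * ((m:ℝ) - 1)) with hldef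
  have hden : 0 < n * ((m:ℝ) - 1) := mul_pos hn (by linarith)
  have hl0 : 0 ≤ l := div_nonneg (mul_nonneg (by linarith) hmpos.le) hden.le
  have hnt : n ≤ t * m := by
    have := (div_le_iff₀ hmpos).mp ht1
    linarith
  have hl1 : l ≤ 1 := by
    rw [hldef, div_le_one hden]
    nlinarith
  have h1l : 0 ≤ 1 - l := by linarith
  have hn0 : n ≠ 0 := hn.ne'
  have hm0 : (m:ℝ) ≠ 0 := hmpos.ne'
  have hm1' : (m:ℝ) - 1 ≠ 0 := by linarith
  have hla : l * a = (n - t) / ((m:ℝ) - 1) := by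
    rw [hldef, hadef]
    field_simp
  have htcomb : l * a + (1 - l) * n = t := by
    rw [hadef, hldef]
    field_simp
    ring
  -- concavity
  have hconc := Real.concaveOn_rpow hα0.le hα1.le
  have key1 : l * a ^ α + (1 - l) * n ^ α ≤ t ^ α := by
    have := hconc.2 (Set.mem_Ici.2 ha.le) (Set.mem_Ici.2 hn.le) hl0 h1l (by ring)
    simpa [smul_eq_mul, htcomb] using this
  -- (l*a)^α ≥ l * a^α
  have key2 : l * a ^ α ≤ (l * a) ^ α := by
    rcases eq_or_lt_of_le hl0 with h | h
    · simp [← h, Real.zero_rpow hα0.ne']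
    · rw [Real.mul_rpow h.le ha.le]
      have : l ^ (1:ℝ) ≤ l ^ α := Real.rpow_le_rpow_of_exponent_ge h hl1 hα1.le
      rw [Real.rpow_one] at this
      exact mul_le_mul_of_nonneg_right this (Real.rpow_nonneg ha.le α)
  -- n^α ≥ d * a^α
  have key3 : (d:ℝ) * a ^ α ≤ n ^ α := by
    have hn_eq : n = (m:ℝ) * a := by rw [hadef]; field_simp
    have hdm : ((d:ℝ) ^ ((s:ℕ) - 1 : ℕ)) ≤ (m:ℝ) := by exact_mod_cast hmd
    have hcast : (((s:ℕ) - 1 : ℕ) : ℝ) = (s:ℝ) - 1 := by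
      have : 1 ≤ s := by omega
      push_cast [this]; ring
    have hd0 : (0:ℝ) ≤ d := by positivity
    have hdrpow : ((d:ℝ) ^ ((s:ℕ) - 1 : ℕ)) ^ α = (d:ℝ) := by
      rw [← Real.rpow_natCast (d:ℝ) ((s:ℕ) - 1), ← Real.rpow_mul hd0, hcast, hαdef]
      rw [mul_one_div, div_self (by linarith), Real.rpow_one]
    have hmα : (d:ℝ) ≤ (m:ℝ) ^ α := by
      rw [← hdrpow]
      exact Real.rpow_le_rpow (by positivity) hdm hα0.le
    rw [hn_eq, Real.mul_rpow hmpos.le ha.le]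
    exact mul_le_mul_of_nonneg_right hmα (Real.rpow_nonneg ha.le α)
  rw [ge_iff_le, ← hla]
  have h4 : (1 - l) * ((d:ℝ) * a ^ α) ≤ (1 - l) * n ^ α :=
    mul_le_mul_of_nonneg_left key3 h1l
  have h5 : ((d:ℝ) - 1) * (l * a ^ α) ≤ ((d:ℝ) - 1) * (l * a) ^ α :=
    mul_le_mul_of_nonneg_left key2 (by linarith)
  nlinarith [key1, h4, h5]
end
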